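/- The integral from |a|² to 1 of arccos(|a|/√t) dt equals arcsin(r) − r√(1−r²), where r² = 1 − |a|² and 0 ≤ |a| ≤ 1. -/

import Mathlib

open Real MeasureTheory

/-!
For `b ≥ 0`, the function `t ↦ t · arccos (b / √t) - b √(t - b²)` is a primitive of
`arccos (b / √t)` on `t > b²`; it vanishes at `t = b²` and equals `arccos b - b √(1 - b²)` at
`t = 1`. With `b = |a|` we have `√(1 - r²) = b` and `arcsin r = arccos b`.
-/

theorem continuousOn_arccos_div_sqrt (b : ℝ) :
    ContinuousOn (fun t => arccos (b / √t)) (Set.Ioi 0) :=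
  continuous_arccos.comp_continuousOn <|
    continuousOn_const.div continuous_sqrt.continuousOn fun _ ht => (sqrt_pos.2 ht).ne'

theorem sqrt_one_sub_div_sqrt_sq {b t : ℝ} (ht : 0 < t) :
    √(1 - (b / √t) ^ 2) = √(t - b ^ 2) / √t := by
  rw [div_pow, sq_sqrt ht.le, one_sub_div ht.ne', sqrt_div' _ ht.le]

theorem hasDerivAt_mul_arccos_div_sqrt_sub {b t : ℝ} (ht : b ^ 2 < t) :
    HasDerivAt (fun x => x * arccos (b / √x) - b * √(x - b ^ 2)) (arccos (b / √t)) t := by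
  have ht0 : 0 < t := (sq_nonneg b).trans_lt ht
  have hs : 0 < √t := sqrt_pos.2 ht0
  have hbt : |b| < √t := by rwa [← sqrt_sq_eq_abs, sqrt_lt_sqrt_iff (sq_nonneg b)]
  have hu : |b / √t| < 1 := by rwa [abs_div, abs_of_pos hs, div_lt_one hs]
  have hquot := (hasDerivAt_const t b).div (hasDerivAt_sqrt ht0.ne') hs.ne'
  have harccos := (hasDerivAt_arccos (abs_lt.1 hu).1.ne' (abs_lt.1 hu).2.ne).comp t hquot
  refine (((hasDerivAt_id t).mul harccos).sub
    (((hasDerivAt_id t).sub_const (b ^ 2)).sqrt (sub_pos.2 ht).ne' |>.const_mul b)).congr_deriv ?_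
  simp only [Function.comp_apply, Pi.div_apply, id]
  rw [sqrt_one_sub_div_sqrt_sq ht0]
  field_simp
  rw [sq_sqrt ht0.le]
  ring

theorem integral_arccos_div_sqrt {b : ℝ} (hb0 : 0 < b) (hb1 : b ≤ 1) :
    ∫ t in b ^ 2..1, arccos (b / √t) = arccos b - b * √(1 - b ^ 2) := by
  have hpos : Set.Icc (b ^ 2) 1 ⊆ Set.Ioi 0 := fun t ht => (pow_pos hb0 2).trans_le ht.1
  have hcont := (continuousOn_arccos_div_sqrt b).mono hpos
  rw [intervalIntegral.integral_eq_sub_of_hasDerivAt_of_le (pow_le_one₀ hb0.le hb1)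
    ((continuousOn_id.mul hcont).sub (continuousOn_const.mul (by fun_prop)))
    (fun t ht => hasDerivAt_mul_arccos_div_sqrt_sub ht.1)
    (hcont.intervalIntegrable_of_Icc (pow_le_one₀ hb0.le hb1))]
  simp [sqrt_sq hb0.le, hb0.ne']

/-- `∫_{a²}^{1} arccos(|a|/√t) dt = arcsin r − r √(1 − r²)` where `r = √(1 − a²)`,
for `|a| ≤ 1`. -/
theorem stmt1 (a r : ℝ) (ha : |a| ≤ 1) (hr : r = Real.sqrt (1 - a ^ 2)) :
    (∫ t in (a ^ 2 : ℝ)..1, Real.arccos (|a| / Real.sqrt t))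
      = Real.arcsin r - r * Real.sqrt (1 - r ^ 2) := by
  have hsq : a ^ 2 = |a| ^ 2 := (sq_abs a).symm
  have hr' : √(1 - r ^ 2) = |a| := by
    rw [hr, sq_sqrt (by nlinarith [abs_nonneg a]), sub_sub_cancel, sqrt_sq_eq_abs]
  rw [hr', hr, hsq, ← arccos_eq_arcsin (abs_nonneg a)]
  rcases (abs_nonneg a).eq_or_lt with h0 | hpos
  · simp [← h0]
  · rw [integral_arccos_div_sqrt hpos ha, mul_comm]
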